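/- arXiv:1604.08087 — 3 statements merged into one kernel-verified Lean document; each statement's English description precedes it below -/
import Mathlib

section
/- Under the hypotheses that Θ = A₁H₁⁻¹A₁ᵀ + A₂H₂⁻¹A₂ᵀ is positive definite (H₁, H₂ symmetric positive definite) and Bᵀ Θ⁻¹ B invertible, the matrix M = [A₁ A₂]ᵀ X [A₁ A₂], with X = Θ⁻¹ − Θ⁻¹B(BᵀΘ⁻¹B)⁻¹BᵀΘ⁻¹, is positive semi-definite; hence the CM covariance P = diag(H₁⁻¹, H₂⁻¹) − diag(H₁⁻¹,H₂⁻¹) M diag(H₁⁻¹,H₂⁻¹) satisfies P ⪯ diag(H₁⁻¹, H₂⁻¹). -/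
/-!
The constrained correction `X = Θ⁻¹ − Θ⁻¹B(BᵀΘ⁻¹B)⁻¹BᵀΘ⁻¹` is the Schur complement of the
block `BᵀΘ⁻¹B` in the Gram matrix `[1 B]ᵀ Θ⁻¹ [1 B]`, which is positive semidefinite; hence
`X ⪰ 0`. Congruence preserves semidefiniteness, so `M = [A₁ A₂]ᵀ X [A₁ A₂] ⪰ 0`, and
`D − P = D M D ⪰ 0` because `D = diag(H₁⁻¹, H₂⁻¹)` is symmetric.
-/

open Matrix
open scoped ComplexOrder

namespace Matrix

variable {m k : Type*} [Fintype m]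

lemma fromBlocks_eq_conjTranspose_fromCols_one_mul_mul {R : Type*} [Semiring R] [StarRing R]
    [DecidableEq m] (Q : Matrix m m R) (B : Matrix m k R) :
    fromBlocks Q (Q * B) (Bᴴ * Q) (Bᴴ * Q * B) = (fromCols 1 B)ᴴ * Q * fromCols 1 B := by
  rw [conjTranspose_fromCols_eq_fromRows_conjTranspose, fromRows_mul, fromRows_mul_fromCols]
  simp

theorem PosSemidef.schur_complement_conjTranspose_mul_mul_same {𝕜 : Type*} [RCLike 𝕜]
    [Fintype k] [DecidableEq k] {Q : Matrix m m 𝕜} (hQ : Q.PosSemidef)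
    (B : Matrix m k 𝕜) (hS : IsUnit (Bᴴ * Q * B).det) :
    (Q - Q * B * (Bᴴ * Q * B)⁻¹ * Bᴴ * Q).PosSemidef := by
  classical
  have hSpos : (Bᴴ * Q * B).PosDef :=
    (hQ.conjTranspose_mul_mul_same B).posDef_iff_isUnit.mpr ((isUnit_iff_isUnit_det _).mpr hS)
  have : Invertible (Bᴴ * Q * B) := invertibleOfIsUnitDet _ hS
  have hGram : (fromBlocks Q (Q * B) (Q * B)ᴴ (Bᴴ * Q * B)).PosSemidef := by
    rw [conjTranspose_mul, hQ.1.eq, fromBlocks_eq_conjTranspose_fromCols_one_mul_mul]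
    exact hQ.conjTranspose_mul_mul_same _
  simpa [conjTranspose_mul, hQ.1.eq, Matrix.mul_assoc] using
    (PosDef.fromBlocks₂₂ Q (Q * B) hSpos).mp hGram

end Matrix

theorem submap_consistency_general
    (n₁ n₂ m k : ℕ)
    (H₁ : Matrix (Fin n₁) (Fin n₁) ℝ) (hH₁ : H₁.PosDef)
    (H₂ : Matrix (Fin n₂) (Fin n₂) ℝ) (hH₂ : H₂.PosDef)
    (A₁ : Matrix (Fin m) (Fin n₁) ℝ) (A₂ : Matrix (Fin m) (Fin n₂) ℝ)
    (B : Matrix (Fin m) (Fin k) ℝ)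
    (Θ : Matrix (Fin m) (Fin m) ℝ)
    (hΘ : Θ.PosDef)
    (hBB : IsUnit (Bᵀ * Θ⁻¹ * B).det)
    (X : Matrix (Fin m) (Fin m) ℝ)
    (hX : X = Θ⁻¹ - Θ⁻¹ * B * (Bᵀ * Θ⁻¹ * B)⁻¹ * Bᵀ * Θ⁻¹)
    (M : Matrix (Fin n₁ ⊕ Fin n₂) (Fin n₁ ⊕ Fin n₂) ℝ)
    (hM : M = (Matrix.fromCols A₁ A₂)ᵀ * X * Matrix.fromCols A₁ A₂)
    (D P : Matrix (Fin n₁ ⊕ Fin n₂) (Fin n₁ ⊕ Fin n₂) ℝ)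
    (hD : D = Matrix.fromBlocks H₁⁻¹ 0 0 H₂⁻¹)
    (hP : P = D - D * M * D) :
    M.PosSemidef ∧ (D - P).PosSemidef := by
  simp only [← conjTranspose_eq_transpose_of_trivial] at hBB hX hM
  have hX_psd : X.PosSemidef :=
    hX ▸ hΘ.inv.posSemidef.schur_complement_conjTranspose_mul_mul_same B hBB
  have hM_psd : M.PosSemidef := hM ▸ hX_psd.conjTranspose_mul_mul_same _
  have hD_herm : D.IsHermitian := hD ▸ hH₁.1.inv.fromBlocks conjTranspose_zero hH₂.1.inv
  refine ⟨hM_psd, ?_⟩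
  rw [hP, sub_sub_cancel]
  have hDMD := hM_psd.conjTranspose_mul_mul_same D
  rwa [hD_herm.eq] at hDMD

/-- Sub-map consistency: with `Θ = A₁H₁⁻¹A₁ᵀ + A₂H₂⁻¹A₂ᵀ` positive definite and
`BᵀΘ⁻¹B` invertible, `M = [A₁ A₂]ᵀ X [A₁ A₂]` is PSD (where
`X = Θ⁻¹ − Θ⁻¹B(BᵀΘ⁻¹B)⁻¹BᵀΘ⁻¹`), hence the CM covariance
`P = D − D M D` with `D = diag(H₁⁻¹, H₂⁻¹)` satisfies `P ⪯ D`. -/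
theorem submap_consistency
    (n₁ n₂ m k : ℕ)
    (H₁ : Matrix (Fin n₁) (Fin n₁) ℝ) (hH₁ : H₁.PosDef)
    (H₂ : Matrix (Fin n₂) (Fin n₂) ℝ) (hH₂ : H₂.PosDef)
    (A₁ : Matrix (Fin m) (Fin n₁) ℝ) (A₂ : Matrix (Fin m) (Fin n₂) ℝ)
    (B : Matrix (Fin m) (Fin k) ℝ)
    (Θ : Matrix (Fin m) (Fin m) ℝ)
    (hΘdef : Θ = A₁ * H₁⁻¹ * A₁ᵀ + A₂ * H₂⁻¹ * A₂ᵀ)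
    (hΘ : Θ.PosDef)
    (hBB : IsUnit (Bᵀ * Θ⁻¹ * B).det)
    (X : Matrix (Fin m) (Fin m) ℝ)
    (hX : X = Θ⁻¹ - Θ⁻¹ * B * (Bᵀ * Θ⁻¹ * B)⁻¹ * Bᵀ * Θ⁻¹)
    (M : Matrix (Fin n₁ ⊕ Fin n₂) (Fin n₁ ⊕ Fin n₂) ℝ)
    (hM : M = (Matrix.fromCols A₁ A₂)ᵀ * X * Matrix.fromCols A₁ A₂)
    (D P : Matrix (Fin n₁ ⊕ Fin n₂) (Fin n₁ ⊕ Fin n₂) ℝ)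
    (hD : D = Matrix.fromBlocks H₁⁻¹ 0 0 H₂⁻¹)
    (hP : P = D - D * M * D) :
    M.PosSemidef ∧ (D - P).PosSemidef :=
  submap_consistency_general n₁ n₂ m k H₁ hH₁ H₂ hH₂ A₁ A₂ B Θ hΘ hBB X hX M hM D P hD hP
end

section
/- Let K = [[H, Aᵀ, 0],[A, 0, B],[0, Bᵀ, 0]] be an invertible symmetric block matrix with H symmetric positive definite. If Θ = A H⁻¹ Aᵀ is positive definite and BᵀΘ⁻¹B is invertible, then the (1,1) block of K⁻¹ is H⁻¹ − H⁻¹Aᵀ[Θ⁻¹ − Θ⁻¹B(BᵀΘ⁻¹B)⁻¹BᵀΘ⁻¹]A H⁻¹. -/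
open Matrix

/-- The (1,1) block of the inverse of the KKT matrix
`K = [[H, Aᵀ, 0],[A, 0, B],[0, Bᵀ, 0]]` equals
`H⁻¹ − H⁻¹Aᵀ[Θ⁻¹ − Θ⁻¹B(BᵀΘ⁻¹B)⁻¹BᵀΘ⁻¹]A H⁻¹` where `Θ = A H⁻¹ Aᵀ`. -/
theorem kkt_top_left_block
    (n m k : ℕ)
    (H : Matrix (Fin n) (Fin n) ℝ) (hH : H.PosDef)
    (A : Matrix (Fin m) (Fin n) ℝ)
    (B : Matrix (Fin m) (Fin k) ℝ)
    (Θ : Matrix (Fin m) (Fin m) ℝ) (hΘdef : Θ = A * H⁻¹ * Aᵀ)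
    (hΘ : Θ.PosDef)
    (hBB : IsUnit (Bᵀ * Θ⁻¹ * B).det)
    (K : Matrix (Fin n ⊕ (Fin m ⊕ Fin k)) (Fin n ⊕ (Fin m ⊕ Fin k)) ℝ)
    (hK : K = Matrix.fromBlocks H (Matrix.fromCols Aᵀ 0)
        (Matrix.fromRows A 0) (Matrix.fromBlocks 0 B Bᵀ 0))
    (hKinv : IsUnit K.det) :
    (K⁻¹).toBlocks₁₁ =
      H⁻¹ - H⁻¹ * Aᵀ *
        (Θ⁻¹ - Θ⁻¹ * B * (Bᵀ * Θ⁻¹ * B)⁻¹ * Bᵀ * Θ⁻¹) * A * H⁻¹ := by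

  haveI iH : Invertible H := hH.isUnit.invertible
  haveI iΘ : Invertible Θ := hΘ.isUnit.invertible
  haveI iBB : Invertible (Bᵀ * Θ⁻¹ * B) := invertibleOfIsUnitDet _ hBB
  haveI inΘ : Invertible (-Θ) := invertibleNeg Θ
  have hS : (fromBlocks 0 B Bᵀ 0 : Matrix (Fin m ⊕ Fin k) (Fin m ⊕ Fin k) ℝ)
      - fromRows A 0 * ⅟H * fromCols Aᵀ 0 = fromBlocks (-Θ) B Bᵀ 0 := by
    rw [invOf_eq_nonsing_inv, Matrix.fromRows_mul, Matrix.fromRows_mul_fromCols]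
    simp [Matrix.fromBlocks_add, sub_eq_add_neg, Matrix.fromBlocks_neg, ← hΘdef]
  haveI iS2 : Invertible ((0 : Matrix (Fin k) (Fin k) ℝ) - Bᵀ * ⅟(-Θ) * B) := by
    have : (0 : Matrix (Fin k) (Fin k) ℝ) - Bᵀ * ⅟(-Θ) * B = Bᵀ * Θ⁻¹ * B := by
      simp [invOf_neg, invOf_eq_nonsing_inv, Matrix.mul_neg, Matrix.neg_mul]
    rw [this]; infer_instance
  haveI iS : Invertible (fromBlocks (-Θ) B Bᵀ (0 : Matrix (Fin k) (Fin k) ℝ)) :=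
    fromBlocks₁₁Invertible _ _ _ _
  haveI iSchur : Invertible ((fromBlocks 0 B Bᵀ 0 : Matrix (Fin m ⊕ Fin k) (Fin m ⊕ Fin k) ℝ)
      - fromRows A 0 * ⅟H * fromCols Aᵀ 0) := by rw [hS]; infer_instance
  subst hK
  haveI iK : Invertible (fromBlocks H (fromCols Aᵀ 0) (fromRows A 0)
      (fromBlocks 0 B Bᵀ 0)) := fromBlocks₁₁Invertible _ _ _ _
  have key : ⅟((fromBlocks 0 B Bᵀ 0 : Matrix (Fin m ⊕ Fin k) (Fin m ⊕ Fin k) ℝ)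
      - fromRows A 0 * ⅟H * fromCols Aᵀ 0) = ⅟(fromBlocks (-Θ) B Bᵀ 0) := by
    rw [invOf_eq_nonsing_inv ((fromBlocks 0 B Bᵀ 0 : Matrix (Fin m ⊕ Fin k) (Fin m ⊕ Fin k) ℝ)
      - fromRows A 0 * ⅟H * fromCols Aᵀ 0), invOf_eq_nonsing_inv (fromBlocks (-Θ) B Bᵀ 0), hS]
  rw [← invOf_eq_nonsing_inv, invOf_fromBlocks₁₁_eq, Matrix.toBlocks_fromBlocks₁₁, key,
    invOf_fromBlocks₁₁_eq]
  rw [Matrix.mul_fromCols, Matrix.fromCols_mul_fromBlocks, Matrix.fromCols_mul_fromRows]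
  simp only [Matrix.mul_zero, Matrix.zero_mul, add_zero, zero_add, invOf_neg,
    invOf_eq_nonsing_inv, Matrix.mul_neg, Matrix.neg_mul, sub_neg_eq_add, zero_sub, neg_neg]
  rw [show -Θ⁻¹ + Θ⁻¹ * B * (Bᵀ * Θ⁻¹ * B)⁻¹ * Bᵀ * Θ⁻¹
      = -(Θ⁻¹ - Θ⁻¹ * B * (Bᵀ * Θ⁻¹ * B)⁻¹ * Bᵀ * Θ⁻¹) from by abel,
    Matrix.mul_neg, Matrix.neg_mul, Matrix.neg_mul, ← sub_eq_add_neg]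
end

section
/- The Schmidt-Kalman covariance update with zeroed map gain preserves symmetry and positive semi-definiteness of the joint covariance: if P = [[P_RR, P_RM],[P_RMᵀ, P_MM]] is symmetric PSD, S = H P Hᵀ + R is positive definite with R PSD, and [K̄_R; K̄_M] = P Hᵀ, then P_SKF⁺ = P − [[K̄_R S⁻¹ K̄_Rᵀ, K̄_R S⁻¹ K̄_Mᵀ],[K̄_M S⁻¹ K̄_Rᵀ, 0]] is symmetric and positive semi-definite. -/
open Matrix

/-!
With `K = P Hᵀ`, the Schmidt update differs from the ordinary Kalman update
`P - K S⁻¹ Kᵀ` only in the map–map block, where it adds back `K̄_M S⁻¹ K̄_Mᵀ ⪰ 0`.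
The Kalman update is positive semidefinite because it is the Schur complement of `S` in
`[[S, H P], [P Hᵀ, P]] = [H; 1] P [H; 1]ᵀ + diag(R, 0) ⪰ 0`.
-/

namespace Matrix

lemma fromRows_mul_mul_conjTranspose_fromRows {m n l α : Type*} [Fintype l] [Semiring α]
    [StarRing α]
    (A₁ : Matrix m l α) (A₂ : Matrix n l α) (M : Matrix l l α) :
    fromRows A₁ A₂ * M * (fromRows A₁ A₂)ᴴ =
      fromBlocks (A₁ * M * A₁ᴴ) (A₁ * M * A₂ᴴ) (A₂ * M * A₁ᴴ) (A₂ * M * A₂ᴴ) := by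
  rw [conjTranspose_fromRows_eq_fromCols_conjTranspose, fromRows_mul, fromRows_mul_fromCols]

variable {m n : Type*} [Fintype m] [Fintype n]

lemma PosSemidef.fromBlocks_zero₁₂_zero₂₁ {R : Type*} [Ring R] [PartialOrder R] [StarRing R]
    [AddLeftMono R] [DecidableEq m] [DecidableEq n] {A : Matrix m m R} {D : Matrix n n R}
    (hA : A.PosSemidef) (hD : D.PosSemidef) : (fromBlocks A 0 0 D).PosSemidef := by
  have h := (hA.mul_mul_conjTranspose_same (fromRows 1 (0 : Matrix n m R))).add
    (hD.mul_mul_conjTranspose_same (fromRows (0 : Matrix m n R) 1))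
  rw [fromRows_mul_mul_conjTranspose_fromRows, fromRows_mul_mul_conjTranspose_fromRows,
    fromBlocks_add] at h
  simpa using h

lemma PosSemidef.sub_kalman_correction {K : Type*} [Field K] [PartialOrder K] [StarRing K]
    [StarOrderedRing K] [DecidableEq m] [DecidableEq n] {P : Matrix n n K} {H : Matrix m n K}
    {R : Matrix m m K} (hP : P.PosSemidef) (hR : R.PosSemidef)
    (hS : (H * P * Hᴴ + R).PosDef) :
    (P - P * Hᴴ * (H * P * Hᴴ + R)⁻¹ * (P * Hᴴ)ᴴ).PosSemidef := by
  have : Invertible (H * P * Hᴴ + R) := hS.isUnit.invertible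
  have hblock : (fromBlocks (H * P * Hᴴ + R) (P * Hᴴ)ᴴ (P * Hᴴ)ᴴᴴ P).PosSemidef := by
    have h := (hP.mul_mul_conjTranspose_same (fromRows H 1)).add
      (hR.fromBlocks_zero₁₂_zero₂₁ (PosSemidef.zero (n := n)))
    rw [fromRows_mul_mul_conjTranspose_fromRows, fromBlocks_add] at h
    simpa [hP.isHermitian.eq] using h
  simpa only [conjTranspose_conjTranspose] using (PosDef.fromBlocks₁₁ _ _ hS).mp hblock

end Matrix

/-- The Schmidt-Kalman covariance update with zeroed map gain preserves
symmetry and positive semi-definiteness of the joint covariance. -/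
theorem schmidt_update_psd
    (r n m : ℕ)
    (P : Matrix (Fin r ⊕ Fin n) (Fin r ⊕ Fin n) ℝ) (hP : P.PosSemidef)
    (H : Matrix (Fin m) (Fin r ⊕ Fin n) ℝ)
    (R : Matrix (Fin m) (Fin m) ℝ) (hR : R.PosSemidef)
    (S : Matrix (Fin m) (Fin m) ℝ) (hS : S = H * P * Hᵀ + R)
    (hSpd : S.PosDef)
    (KbarR : Matrix (Fin r) (Fin m) ℝ)
    (hKR : KbarR = Matrix.toRows₁ (P * Hᵀ))
    (KbarM : Matrix (Fin n) (Fin m) ℝ)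
    (hKM : KbarM = Matrix.toRows₂ (P * Hᵀ)) :
    (P - Matrix.fromBlocks (KbarR * S⁻¹ * KbarRᵀ) (KbarR * S⁻¹ * KbarMᵀ)
        (KbarM * S⁻¹ * KbarRᵀ) 0).IsSymm ∧
    (P - Matrix.fromBlocks (KbarR * S⁻¹ * KbarRᵀ) (KbarR * S⁻¹ * KbarMᵀ)
        (KbarM * S⁻¹ * KbarRᵀ) 0).PosSemidef := by
  simp only [← conjTranspose_eq_transpose_of_trivial] at hS hKR hKM ⊢
  have hK : P * Hᴴ = fromRows KbarR KbarM := by rw [hKR, hKM, fromRows_toRows]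
  have hKalman : (P - fromRows KbarR KbarM * S⁻¹ * (fromRows KbarR KbarM)ᴴ).PosSemidef := by
    subst hS
    rw [← hK]
    exact hP.sub_kalman_correction hR hSpd
  have hMM : (KbarM * S⁻¹ * KbarMᴴ).PosSemidef :=
    hSpd.inv.posSemidef.mul_mul_conjTranspose_same KbarM
  have hSchmidt : P - fromBlocks (KbarR * S⁻¹ * KbarRᴴ) (KbarR * S⁻¹ * KbarMᴴ)
        (KbarM * S⁻¹ * KbarRᴴ) 0 =
      (P - fromRows KbarR KbarM * S⁻¹ * (fromRows KbarR KbarM)ᴴ) +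
        fromBlocks 0 0 0 (KbarM * S⁻¹ * KbarMᴴ) := by
    rw [fromRows_mul_mul_conjTranspose_fromRows, sub_add, sub_eq_add_neg _ (fromBlocks 0 0 0 _),
      fromBlocks_neg, fromBlocks_add]
    simp
  rw [hSchmidt]
  have hpsd := hKalman.add (PosSemidef.zero.fromBlocks_zero₁₂_zero₂₁ hMM)
  exact ⟨isHermitian_iff_isSymm.mp hpsd.isHermitian, hpsd⟩
end
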